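/- arXiv:1809.02951 — 8 statements merged into one kernel-verified Lean document; each statement's English description precedes it below -/
import Mathlib

section
/- Let q be a nonzero complex number that is not a root of unity, and let α, β be nonzero complex numbers such that α^u β^v = q² for some integers u, v. If (r, s) and (r₁, s₁) are both minimal pairs with respect to (α, β), then (r₁, s₁) = (r, s) or (r₁, s₁) = (−r, −s). -/
/-!
The relations `α ^ r * β ^ s = 1` form a subgroup `L` of `ℤ²`, and minimal pairs are exactly the
elements of `L` that are not proper multiples of other elements of `L`. For two relations `x, y`
with determinant `D`, both `α ^ D` and `β ^ D` equal `1`, hence so does `(q ^ 2) ^ D`; thus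
`D = 0` and all relations lie on one line `ℤ p` with `p` primitive. If `g • p` and `m • p` are
both minimal, Bézout puts `gcd(g, m) • p` in `L`, so `g` and `m` are both `± gcd(g, m)`.
-/

/-- A pair of integers `(r, s)` with `α^r * β^s = 1` is *minimal* with respect to
`(α, β)` if whenever `r = w * r'`, `s = w * s'` with `w ≠ ±1`, one has `α^r' * β^s' ≠ 1`. -/
def IsMinimalPair (α β : ℂ) (r s : ℤ) : Prop :=
  α ^ r * β ^ s = 1 ∧
    ∀ w r' s' : ℤ, w ≠ 1 → w ≠ -1 → r = w * r' → s = w * s' → α ^ r' * β ^ s' ≠ 1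

def IsIndivisibleIn {M : Type*} [AddCommGroup M] (L : AddSubgroup M) (v : M) : Prop :=
  v ∈ L ∧ ∀ (w : ℤ) (v' : M), v' ∈ L → v = w • v' → IsUnit w

namespace IsIndivisibleIn

variable {M : Type*} [AddCommGroup M] {L : AddSubgroup M}

theorem ne_zero {v : M} (hv : IsIndivisibleIn L v) : v ≠ 0 := by
  rintro rfl
  exact not_isUnit_zero (hv.2 0 0 L.zero_mem (zero_smul ℤ 0).symm)

theorem natAbs_eq {p : M} {g m : ℤ} (hg : IsIndivisibleIn L (g • p))
    (hm : IsIndivisibleIn L (m • p)) : g.natAbs = m.natAbs := by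
  set e : ℤ := (Int.gcd g m : ℤ)
  have he : e • p ∈ L := by
    rw [show e = g * g.gcdA m + m * g.gcdB m from Int.gcd_eq_gcd_ab g m, add_smul,
      mul_comm g, mul_comm m, mul_smul, mul_smul]
    exact L.add_mem (L.zsmul_mem hg.1 _) (L.zsmul_mem hm.1 _)
  have natAbs_eq_gcd :
      ∀ {k : ℤ}, IsIndivisibleIn L (k • p) → e ∣ k → k.natAbs = Int.gcd g m := by
    rintro k hk ⟨c, rfl⟩
    have hc : IsUnit c := hk.2 c _ he (by rw [mul_comm, mul_smul])
    rw [Int.natAbs_mul, Int.isUnit_iff_natAbs_eq.mp hc, mul_one, Int.natAbs_natCast]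
  rw [natAbs_eq_gcd hg (Int.gcd_dvd_left g m), natAbs_eq_gcd hm (Int.gcd_dvd_right g m)]

end IsIndivisibleIn

theorem Int.exists_eq_smul_of_isCoprime {a b r s : ℤ} (hab : IsCoprime a b)
    (hdet : a * s = r * b) : ∃ m : ℤ, (r, s) = m • (a, b) := by
  obtain ⟨x, y, hxy⟩ := hab
  refine ⟨r * x + s * y, Prod.ext ?_ ?_⟩ <;> simp only [Prod.smul_mk, smul_eq_mul]
  · linear_combination -r * hxy - y * hdet
  · linear_combination -s * hxy + x * hdet

theorem IsIndivisibleIn.eq_or_eq_neg_of_det_eq_zero {L : AddSubgroup (ℤ × ℤ)} {v v₁ : ℤ × ℤ}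
    (hv : IsIndivisibleIn L v) (hv₁ : IsIndivisibleIn L v₁) (hdet : v.1 * v₁.2 = v₁.1 * v.2) :
    v₁ = v ∨ v₁ = -v := by
  obtain ⟨r, s⟩ := v
  obtain ⟨r₁, s₁⟩ := v₁
  have hgcd : 0 < Int.gcd r s := Int.gcd_pos_iff.mpr <| by
    by_contra! h
    exact hv.ne_zero (Prod.ext h.1 h.2)
  obtain ⟨g, a, b, -, hab, rfl, rfl⟩ := Int.exists_gcd_one' hgcd
  have hg : (g : ℤ) ≠ 0 := by rintro h; exact hv.ne_zero (by simp [h])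
  obtain ⟨m, hm⟩ := Int.exists_eq_smul_of_isCoprime (Int.isCoprime_iff_gcd_eq_one.mpr hab)
    (mul_left_cancel₀ hg (show (g : ℤ) * (a * s₁) = g * (r₁ * b) by linear_combination hdet))
  have hv' : (a * g, b * g) = (g : ℤ) • (a, b) := by simp [mul_comm]
  rw [hv'] at hv ⊢
  rw [hm] at hv₁ ⊢
  rcases Int.natAbs_eq_natAbs_iff.mp (hv₁.natAbs_eq hv) with rfl | rfl
  · exact .inl rfl
  · exact .inr (neg_smul _ _)

section Relations

variable {G₀ : Type*} [CommGroupWithZero G₀] {α β : G₀}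

def relationSubgroup (hα : α ≠ 0) (hβ : β ≠ 0) : AddSubgroup (ℤ × ℤ) where
  carrier := {x | α ^ x.1 * β ^ x.2 = 1}
  add_mem' {x y} hx hy := by
    simp only [Set.mem_ofPred_eq, Prod.fst_add, Prod.snd_add, zpow_add₀ hα, zpow_add₀ hβ] at *
    rw [mul_mul_mul_comm, hx, hy, one_mul]
  zero_mem' := by simp
  neg_mem' {x} hx := by
    simp only [Set.mem_ofPred_eq, Prod.fst_neg, Prod.snd_neg, zpow_neg, ← mul_inv] at *
    rw [hx, inv_one]

variable (hα : α ≠ 0) (hβ : β ≠ 0)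

theorem mem_relationSubgroup {x : ℤ × ℤ} :
    x ∈ relationSubgroup hα hβ ↔ α ^ x.1 * β ^ x.2 = 1 := Iff.rfl

theorem det_eq_zero_of_mem_relationSubgroup {u v : ℤ}
    (hγ : ∀ n : ℤ, n ≠ 0 → (α ^ u * β ^ v) ^ n ≠ 1) {x y : ℤ × ℤ}
    (hx : x ∈ relationSubgroup hα hβ) (hy : y ∈ relationSubgroup hα hβ) :
    x.1 * y.2 = y.1 * x.2 := by
  set D := x.1 * y.2 - y.1 * x.2
  have hαD : α ^ D = 1 := by
    have := (relationSubgroup hα hβ).sub_mem (zsmul_mem hx y.2) (zsmul_mem hy x.2)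
    simpa [D, mem_relationSubgroup, mul_comm] using this
  have hβD : β ^ D = 1 := by
    have := (relationSubgroup hα hβ).sub_mem (zsmul_mem hy x.1) (zsmul_mem hx y.1)
    simpa [D, mem_relationSubgroup, mul_comm] using this
  have : (α ^ u * β ^ v) ^ D = 1 := by
    rw [mul_zpow, ← zpow_mul, ← zpow_mul, mul_comm u, mul_comm v, zpow_mul, zpow_mul, hαD, hβD,
      one_zpow, one_zpow, one_mul]
  by_contra h
  exact hγ D (sub_ne_zero.mpr h) this

end Relations

theorem isMinimalPair_iff {α β : ℂ} (hα : α ≠ 0) (hβ : β ≠ 0) {r s : ℤ} :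
    IsMinimalPair α β r s ↔ IsIndivisibleIn (relationSubgroup hα hβ) (r, s) := by
  simp only [IsMinimalPair, IsIndivisibleIn, mem_relationSubgroup, Prod.forall, Prod.smul_mk,
    smul_eq_mul, Prod.mk.injEq, Int.isUnit_iff]
  refine and_congr_right fun _ =>
    ⟨fun h w r' s' hrs' hrs => ?_, fun h w r' s' h1 h2 hr hs hrs' => ?_⟩
  · by_contra! hw
    exact h w r' s' hw.1 hw.2 hrs.1 hrs.2 hrs'
  · rcases h w r' s' hrs' ⟨hr, hs⟩ with rfl | rfl <;> contradiction

theorem minimal_pair_unique_up_to_sign_general (q α β : ℂ)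
    (hqn : ∀ n : ℤ, n ≠ 0 → q ^ n ≠ 1) (hα : α ≠ 0) (hβ : β ≠ 0)
    (huv : ∃ u v : ℤ, α ^ u * β ^ v = q ^ 2)
    (r s r₁ s₁ : ℤ)
    (h1 : IsMinimalPair α β r s) (h2 : IsMinimalPair α β r₁ s₁) :
    (r₁, s₁) = (r, s) ∨ (r₁, s₁) = (-r, -s) := by
  obtain ⟨u, v, huv⟩ := huv
  have hγ : ∀ n : ℤ, n ≠ 0 → (α ^ u * β ^ v) ^ n ≠ 1 := fun n hn => by
    rw [huv, ← zpow_natCast, ← zpow_mul]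
    exact hqn _ (by omega)
  rw [isMinimalPair_iff hα hβ] at h1 h2
  exact h1.eq_or_eq_neg_of_det_eq_zero h2
    (det_eq_zero_of_mem_relationSubgroup hα hβ hγ h1.1 h2.1)

/-- If `q` is not a root of unity, `α^u * β^v = q^2` for some integers
`u, v`, and `(r, s)` and `(r₁, s₁)` are both minimal pairs with respect to `(α, β)`,
then `(r₁, s₁) = (r, s)` or `(r₁, s₁) = (-r, -s)`. -/
theorem minimal_pair_unique_up_to_sign (q α β : ℂ) (hq : q ≠ 0)
    (hqn : ∀ n : ℤ, n ≠ 0 → q ^ n ≠ 1) (hα : α ≠ 0) (hβ : β ≠ 0)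
    (huv : ∃ u v : ℤ, α ^ u * β ^ v = q ^ 2)
    (r s r₁ s₁ : ℤ)
    (h1 : IsMinimalPair α β r s) (h2 : IsMinimalPair α β r₁ s₁) :
    (r₁, s₁) = (r, s) ∨ (r₁, s₁) = (-r, -s) :=
  minimal_pair_unique_up_to_sign_general q α β hqn hα hβ huv r s r₁ s₁ h1 h2
end

section
/- Let q, α, β be nonzero complex numbers and let Φ be the integral 2×2 matrix with rows (r, s) and (u, v), where α^r β^s = 1, α^u β^v = q², and the pair (r, s) is minimal with respect to (α, β). Let σ ∈ SL(2, ℤ) and let (α', β') = σ·(α, β) under the SL(2, ℤ)-action on (ℂ∖{0})². Write Φ' = Φ·σ⁻¹, with rows (r', s') and (u', v'). Then α'^(r') β'^(s') = 1, α'^(u') β'^(v') = q², and the pair (r', s') is minimal with respect to (α', β'). -/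
open Matrix

section LaurentMonomial

variable {G₀ : Type*} [CommGroupWithZero G₀]

def laurentMonomial (α β : G₀) (x : Fin 2 → ℤ) : G₀ :=
  α ^ x 0 * β ^ x 1

variable {α β : G₀}

lemma laurentMonomial_laurentMonomial (hα : α ≠ 0) (hβ : β ≠ 0)
    (A : Matrix (Fin 2) (Fin 2) ℤ) (x : Fin 2 → ℤ) :
    laurentMonomial (laurentMonomial α β (A 0)) (laurentMonomial α β (A 1)) x =
      laurentMonomial α β (x ᵥ* A) := by
  simp only [laurentMonomial, vecMul, dotProduct, Fin.sum_univ_two, mul_zpow, ← _root_.zpow_mul',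
    zpow_add₀ hα, zpow_add₀ hβ]
  exact mul_mul_mul_comm _ _ _ _

lemma laurentMonomial_vecMul_of_mul_eq_one (hα : α ≠ 0) (hβ : β ≠ 0)
    {A B : Matrix (Fin 2) (Fin 2) ℤ} (hBA : B * A = 1) (x : Fin 2 → ℤ) :
    laurentMonomial (laurentMonomial α β (A 0)) (laurentMonomial α β (A 1)) (x ᵥ* B) =
      laurentMonomial α β x := by
  rw [laurentMonomial_laurentMonomial hα hβ, vecMul_vecMul, hBA, vecMul_one]

end LaurentMonomial

lemma isMinimalPair_iff_s5 {α β : ℂ} {x : Fin 2 → ℤ} :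
    IsMinimalPair α β (x 0) (x 1) ↔ laurentMonomial α β x = 1 ∧
      ∀ (w : ℤ) (z : Fin 2 → ℤ), w ≠ 1 → w ≠ -1 → x = w • z → laurentMonomial α β z ≠ 1 := by
  refine and_congr_right fun _ => ⟨fun h w z hw1 hw2 hxz => ?_, fun h w r s hw1 hw2 hr hs => ?_⟩
  · exact h w (z 0) (z 1) hw1 hw2 (congrFun hxz 0) (congrFun hxz 1)
  · refine h w ![r, s] hw1 hw2 (funext fun i => ?_)
    fin_cases i <;> assumption

lemma IsMinimalPair.vecMul_of_mul_eq_one {α β : ℂ} (hα : α ≠ 0) (hβ : β ≠ 0) {x : Fin 2 → ℤ}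
    (h : IsMinimalPair α β (x 0) (x 1)) {A B : Matrix (Fin 2) (Fin 2) ℤ} (hBA : B * A = 1) :
    IsMinimalPair (laurentMonomial α β (A 0)) (laurentMonomial α β (A 1))
      ((x ᵥ* B) 0) ((x ᵥ* B) 1) := by
  obtain ⟨hx, hprim⟩ := isMinimalPair_iff_s5.mp h
  refine isMinimalPair_iff_s5.mpr ⟨(laurentMonomial_vecMul_of_mul_eq_one hα hβ hBA x).trans hx,
    fun w z hw1 hw2 hxz => ?_⟩
  rw [laurentMonomial_laurentMonomial hα hβ]
  refine hprim w (z ᵥ* A) hw1 hw2 ?_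
  calc x = x ᵥ* B ᵥ* A := by rw [vecMul_vecMul, hBA, vecMul_one]
    _ = w • (z ᵥ* A) := by rw [hxz, smul_vecMul]

theorem integral_parameters_transform_general (q α β : ℂ) (hα : α ≠ 0) (hβ : β ≠ 0)
    (r s u v : ℤ) (h2 : α ^ u * β ^ v = q ^ 2)
    (hmin : IsMinimalPair α β r s)
    (σ : Matrix.SpecialLinearGroup (Fin 2) ℤ)
    (α' β' : ℂ)
    (hα' : α' = α ^ ((σ : Matrix (Fin 2) (Fin 2) ℤ) 0 0) *
      β ^ ((σ : Matrix (Fin 2) (Fin 2) ℤ) 0 1))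
    (hβ' : β' = α ^ ((σ : Matrix (Fin 2) (Fin 2) ℤ) 1 0) *
      β ^ ((σ : Matrix (Fin 2) (Fin 2) ℤ) 1 1))
    (Φ' : Matrix (Fin 2) (Fin 2) ℤ)
    (hΦ' : Φ' = !![r, s; u, v] * ((σ⁻¹ : Matrix.SpecialLinearGroup (Fin 2) ℤ) :
      Matrix (Fin 2) (Fin 2) ℤ)) :
    α' ^ (Φ' 0 0) * β' ^ (Φ' 0 1) = 1 ∧
    α' ^ (Φ' 1 0) * β' ^ (Φ' 1 1) = q ^ 2 ∧
    IsMinimalPair α' β' (Φ' 0 0) (Φ' 0 1) := by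
  have hσ : ((σ⁻¹ : SpecialLinearGroup (Fin 2) ℤ) : Matrix (Fin 2) (Fin 2) ℤ) * σ = 1 :=
    congrArg Subtype.val (inv_mul_cancel σ)
  subst hα' hβ' hΦ'
  exact ⟨(laurentMonomial_vecMul_of_mul_eq_one hα hβ hσ ![r, s]).trans hmin.1,
    (laurentMonomial_vecMul_of_mul_eq_one hα hβ hσ ![u, v]).trans h2,
    IsMinimalPair.vecMul_of_mul_eq_one hα hβ (x := ![r, s]) hmin hσ⟩

/-- Transporting the matrix `Φ = !![r, s; u, v]` of integral parameters
along the `SL(2, ℤ)`-action `σ · (α, β) = (α^k β^m, α^l β^n)` by `Φ' = Φ * σ⁻¹`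
again yields integral parameters: `α'^r' β'^s' = 1`, `α'^u' β'^v' = q^2`, and
`(r', s')` is minimal with respect to `(α', β')`. -/
theorem integral_parameters_transform (q α β : ℂ) (hq : q ≠ 0) (hα : α ≠ 0) (hβ : β ≠ 0)
    (r s u v : ℤ) (h2 : α ^ u * β ^ v = q ^ 2)
    (hmin : IsMinimalPair α β r s)
    (σ : Matrix.SpecialLinearGroup (Fin 2) ℤ)
    (α' β' : ℂ)
    (hα' : α' = α ^ ((σ : Matrix (Fin 2) (Fin 2) ℤ) 0 0) *
      β ^ ((σ : Matrix (Fin 2) (Fin 2) ℤ) 0 1))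
    (hβ' : β' = α ^ ((σ : Matrix (Fin 2) (Fin 2) ℤ) 1 0) *
      β ^ ((σ : Matrix (Fin 2) (Fin 2) ℤ) 1 1))
    (Φ' : Matrix (Fin 2) (Fin 2) ℤ)
    (hΦ' : Φ' = !![r, s; u, v] * ((σ⁻¹ : Matrix.SpecialLinearGroup (Fin 2) ℤ) :
      Matrix (Fin 2) (Fin 2) ℤ)) :
    α' ^ (Φ' 0 0) * β' ^ (Φ' 0 1) = 1 ∧
    α' ^ (Φ' 1 0) * β' ^ (Φ' 1 1) = q ^ 2 ∧
    IsMinimalPair α' β' (Φ' 0 0) (Φ' 0 1) :=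
  integral_parameters_transform_general q α β hα hβ r s u v h2 hmin σ α' β' hα' hβ' Φ' hΦ'
end

section
/- Let r, s, u, v be integers with r·v − s·u = 2 and gcd(r, s) = 1, and let q be a nonzero complex number that is not a root of unity. Then the set {(α, β) ∈ (ℂ∖{0})² : α^r β^s = 1 and α^u β^v = q²} equals {(q^(−s), q^r), ((−1)^s q^(−s), (−1)^r q^r)}, and these two pairs are distinct. -/
/-!
The pair `(q ^ (-s), q ^ r)` solves the system, so the solutions are that pair times the
solutions `(x, y)` of the homogeneous system `x ^ r * y ^ s = 1 = x ^ u * y ^ v`. Eliminating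
with the adjugate of `!![r, s; u, v]` gives `x ^ 2 = y ^ 2 = 1`, so `x, y = ±1`, and since `r`
and `s` are not both even the first equation leaves exactly `(1, 1)` and `((-1) ^ s, (-1) ^ r)`.
-/

section CommGroupWithZero

variable {G : Type*} [CommGroupWithZero G]

theorem zpow_det_eq_one_of_zpow_mul_zpow_eq_one {x y : G} (hx : x ≠ 0) (hy : y ≠ 0)
    {r s u v : ℤ} (h₁ : x ^ r * y ^ s = 1) (h₂ : x ^ u * y ^ v = 1) :
    x ^ (r * v - s * u) = 1 ∧ y ^ (r * v - s * u) = 1 := by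
  constructor
  · calc x ^ (r * v - s * u) = (x ^ r * y ^ s) ^ v / (x ^ u * y ^ v) ^ s := by
          rw [mul_zpow, mul_zpow, ← zpow_mul, ← zpow_mul, ← zpow_mul, ← zpow_mul,
            zpow_sub₀ hx, mul_comm s v, mul_comm u s]
          field_simp
      _ = 1 := by rw [h₁, h₂, one_zpow, one_zpow, div_one]
  · calc y ^ (r * v - s * u) = (x ^ u * y ^ v) ^ r / (x ^ r * y ^ s) ^ u := by
          rw [mul_zpow, mul_zpow, ← zpow_mul, ← zpow_mul, ← zpow_mul, ← zpow_mul,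
            zpow_sub₀ hy, mul_comm r v, mul_comm u r, mul_comm s u]
          field_simp
      _ = 1 := by rw [h₁, h₂, one_zpow, one_zpow, div_one]

theorem mul_zpow_mul_mul_zpow {t : G} (ht : t ≠ 0) (x y : G) (r s u v : ℤ) :
    (x * t ^ (-s)) ^ u * (y * t ^ r) ^ v = x ^ u * y ^ v * t ^ (r * v - s * u) := by
  rw [mul_zpow, mul_zpow, ← zpow_mul, ← zpow_mul, mul_mul_mul_comm, ← zpow_add₀ ht]
  ring_nf

end CommGroupWithZero

theorem Int.not_even_and_even_of_gcd_eq_one {r s : ℤ} (hg : Int.gcd r s = 1) :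
    ¬(Even r ∧ Even s) := by
  rintro ⟨hr, hs⟩
  have := (Int.isCoprime_iff_gcd_eq_one.mpr hg).isUnit_of_dvd' hr.two_dvd hs.two_dvd
  simp [Int.isUnit_iff] at this

section Field

variable {K : Type*} [Field K]

theorem zpow_mul_zpow_eq_one_iff_of_det_eq_two (hK : (-1 : K) ≠ 1) {r s u v : ℤ}
    (hg : Int.gcd r s = 1) (hdet : r * v - s * u = 2) {x y : K} :
    (x ≠ 0 ∧ y ≠ 0 ∧ x ^ r * y ^ s = 1 ∧ x ^ u * y ^ v = 1) ↔
      (x = 1 ∧ y = 1) ∨ (x = (-1) ^ s ∧ y = (-1) ^ r) := by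
  constructor
  · rintro ⟨hx, hy, h₁, h₂⟩
    obtain ⟨hx2, hy2⟩ := zpow_det_eq_one_of_zpow_mul_zpow_eq_one hx hy h₁ h₂
    rw [hdet, zpow_two, ← sq, sq_eq_one_iff] at hx2 hy2
    have hrs := Int.not_even_and_even_of_gcd_eq_one hg
    -- for `x, y = ±1`, the condition `x ^ r * y ^ s = 1` only sees the parities of `r` and `s`
    rcases hx2 with rfl | rfl <;> rcases hy2 with rfl | rfl <;>
      rcases Int.even_or_odd r with hr | hr <;> rcases Int.even_or_odd s with hs | hs <;>
      simp_all [Even.neg_one_zpow, Odd.neg_one_zpow, hK.symm]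
  · rintro (⟨rfl, rfl⟩ | ⟨rfl, rfl⟩)
    · simp
    · have hdet' : Even (s * u + r * v) := ⟨1 + s * u, by linear_combination hdet⟩
      have h₀ : (-1 : K) ≠ 0 := neg_ne_zero.mpr one_ne_zero
      refine ⟨zpow_ne_zero _ h₀, zpow_ne_zero _ h₀, ?_, ?_⟩
      · rw [← zpow_mul, ← zpow_mul, ← zpow_add₀ h₀, mul_comm, ← two_mul]
        exact (even_two_mul _).neg_one_zpow
      · rw [← zpow_mul, ← zpow_mul, ← zpow_add₀ h₀]
        exact hdet'.neg_one_zpow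

theorem neg_one_zpow_pair_ne_one (hK : (-1 : K) ≠ 1) {r s : ℤ} (hg : Int.gcd r s = 1) :
    ((-1 : K) ^ s, (-1 : K) ^ r) ≠ 1 := by
  have := Int.not_even_and_even_of_gcd_eq_one hg
  simp only [ne_eq, Prod.ext_iff, Prod.fst_one, Prod.snd_one, neg_one_zpow_eq_ite]
  split_ifs <;> simp_all

end Field

theorem weight_constants_det_two_gcd_one_general (r s u v : ℤ) (h2 : r * v - s * u = 2)
    (hg : Int.gcd r s = 1) (q : ℂ) (hq : q ≠ 0) :
    ({p : ℂ × ℂ | p.1 ≠ 0 ∧ p.2 ≠ 0 ∧ p.1 ^ r * p.2 ^ s = 1 ∧ p.1 ^ u * p.2 ^ v = q ^ 2}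
      = {(q ^ (-s), q ^ r), ((-1 : ℂ) ^ s * q ^ (-s), (-1 : ℂ) ^ r * q ^ r)}) ∧
    ((q ^ (-s), q ^ r) : ℂ × ℂ) ≠ ((-1 : ℂ) ^ s * q ^ (-s), (-1 : ℂ) ^ r * q ^ r) := by
  have hK : (-1 : ℂ) ≠ 1 := by norm_num
  have hqs : q ^ (-s) ≠ 0 := zpow_ne_zero _ hq
  have hqr : q ^ r ≠ 0 := zpow_ne_zero _ hq
  constructor
  · ext ⟨α, β⟩
    obtain ⟨x, rfl⟩ : ∃ x, α = x * q ^ (-s) := ⟨α / q ^ (-s), (div_mul_cancel₀ α hqs).symm⟩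
    obtain ⟨y, rfl⟩ : ∃ y, β = y * q ^ r := ⟨β / q ^ r, (div_mul_cancel₀ β hqr).symm⟩
    have h₁ : (x * q ^ (-s)) ^ r * (y * q ^ r) ^ s = x ^ r * y ^ s := by
      rw [mul_zpow_mul_mul_zpow hq, mul_comm r s, sub_self, zpow_zero, mul_one]
    have h₂ : (x * q ^ (-s)) ^ u * (y * q ^ r) ^ v = x ^ u * y ^ v * q ^ 2 := by
      rw [mul_zpow_mul_mul_zpow hq, h2, zpow_two, sq]
    simp only [Set.mem_ofPred_eq, Set.mem_insert_iff, Set.mem_singleton_iff, Prod.mk.injEq,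
      h₁, h₂, mul_ne_zero_iff, hqs, hqr, ne_eq, not_false_eq_true, and_true, mul_eq_right₀ hqs,
      mul_eq_right₀ hqr, mul_eq_right₀ (pow_ne_zero 2 hq), mul_left_inj' hqs, mul_left_inj' hqr]
    exact zpow_mul_zpow_eq_one_iff_of_det_eq_two hK hg h2
  · intro h
    obtain ⟨hs, hr⟩ := Prod.mk.inj h
    exact neg_one_zpow_pair_ne_one hK hg
      (Prod.ext ((mul_eq_right₀ hqs).mp hs.symm) ((mul_eq_right₀ hqr).mp hr.symm))

/-- For integers `r, s, u, v` with `r*v - s*u = 2` and `gcd(r, s) = 1`,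
and `q` nonzero and not a root of unity, the set of pairs `(α, β)` of nonzero complex
numbers with `α^r β^s = 1` and `α^u β^v = q^2` equals
`{(q^(-s), q^r), ((-1)^s q^(-s), (-1)^r q^r)}`, and these two pairs are distinct. -/
theorem weight_constants_det_two_gcd_one (r s u v : ℤ) (h2 : r * v - s * u = 2)
    (hg : Int.gcd r s = 1) (q : ℂ) (hq : q ≠ 0) (hqn : ∀ n : ℤ, n ≠ 0 → q ^ n ≠ 1) :
    ({p : ℂ × ℂ | p.1 ≠ 0 ∧ p.2 ≠ 0 ∧ p.1 ^ r * p.2 ^ s = 1 ∧ p.1 ^ u * p.2 ^ v = q ^ 2}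
      = {(q ^ (-s), q ^ r), ((-1 : ℂ) ^ s * q ^ (-s), (-1 : ℂ) ^ r * q ^ r)}) ∧
    ((q ^ (-s), q ^ r) : ℂ × ℂ) ≠ ((-1 : ℂ) ^ s * q ^ (-s), (-1 : ℂ) ^ r * q ^ r) :=
  weight_constants_det_two_gcd_one_general r s u v h2 hg q hq
end

section
/- Let t be a nonzero complex number that is not a root of unity, and let r, s be integers that are not both even. Then for every σ ∈ SL(2, ℤ), one has σ·(t^(−s), t^r) ≠ ((−1)^s t^(−s), (−1)^r t^r), i.e. the pairs (t^(−s), t^r) and ((−1)^s t^(−s), (−1)^r t^r) lie on different orbits of the SL(2, ℤ)-action on (ℂ∖{0})². -/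
/-! If `σ` moved `(t^(-s), t^r)` to `((-1)^s t^(-s), (-1)^r t^r)`, each coordinate would give an
identity `t^a = (-1)^e t^b`. Squaring it yields `t^(2(a - b)) = 1`, so `a = b` as `t` is not a root
of unity, and then `(-1)^e = 1` forces `e` to be even; hence `r` and `s` would both be even. -/

section NotRootOfUnity

variable {K : Type*} [Field K] {t : K}

lemma zpow_injective_of_not_root_of_unity (ht : t ≠ 0)
    (htn : ∀ n : ℤ, n ≠ 0 → t ^ n ≠ 1) : Function.Injective fun n : ℤ ↦ t ^ n := by
  intro a b hab
  by_contra hne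
  refine htn (a - b) (sub_ne_zero.mpr hne) ?_
  simp only [zpow_sub₀ ht, hab, div_self (zpow_ne_zero b ht)]

lemma even_of_zpow_eq_neg_one_zpow_mul (hK : ringChar K ≠ 2) (ht : t ≠ 0)
    (htn : ∀ n : ℤ, n ≠ 0 → t ^ n ≠ 1) {a b e : ℤ} (h : t ^ a = (-1 : K) ^ e * t ^ b) :
    Even e := by
  have hsq : t ^ (a * 2) = t ^ (b * 2) := by
    rw [zpow_mul, zpow_mul, h, mul_zpow, ← zpow_mul, mul_comm e 2, zpow_mul]
    norm_num
  have hab : a = b := by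
    simpa using zpow_injective_of_not_root_of_unity ht htn hsq
  subst hab
  have hsign : (-1 : K) ^ e = 1 :=
    (mul_eq_right₀ (zpow_ne_zero a ht)).mp h.symm
  by_contra hodd
  rw [neg_one_zpow_eq_ite, if_neg hodd] at hsign
  exact Ring.neg_one_ne_one_of_char_ne_two hK hsign

end NotRootOfUnity

/-- If `t` is not a root of unity and `r, s` are not both even, then the
pairs `(t^(-s), t^r)` and `((-1)^s t^(-s), (-1)^r t^r)` lie on different orbits of the
`SL(2, ℤ)`-action `σ · (α, β) = (α^k β^m, α^l β^n)` on pairs of nonzero complex numbers. -/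
theorem pairs_on_different_SL2_orbits (t : ℂ) (ht : t ≠ 0)
    (htn : ∀ n : ℤ, n ≠ 0 → t ^ n ≠ 1) (r s : ℤ) (h : ¬(Even r ∧ Even s)) :
    ∀ σ : Matrix.SpecialLinearGroup (Fin 2) ℤ,
      (((t ^ (-s)) ^ ((σ : Matrix (Fin 2) (Fin 2) ℤ) 0 0) *
          (t ^ r) ^ ((σ : Matrix (Fin 2) (Fin 2) ℤ) 0 1),
        (t ^ (-s)) ^ ((σ : Matrix (Fin 2) (Fin 2) ℤ) 1 0) *
          (t ^ r) ^ ((σ : Matrix (Fin 2) (Fin 2) ℤ) 1 1)) : ℂ × ℂ)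
        ≠ ((-1 : ℂ) ^ s * t ^ (-s), (-1 : ℂ) ^ r * t ^ r) := by
  intro σ heq
  obtain ⟨h₁, h₂⟩ := Prod.mk.inj heq
  rw [← zpow_mul, ← zpow_mul, ← zpow_add₀ ht] at h₁ h₂
  have hℂ : ringChar ℂ ≠ 2 := by simp [ringChar.eq_zero]
  exact h ⟨even_of_zpow_eq_neg_one_zpow_mul hℂ ht htn h₂,
    even_of_zpow_eq_neg_one_zpow_mul hℂ ht htn h₁⟩
end

section
/- Let r, s, u, v be integers with r·v − s·u = 2, r = 2r', s = 2s', gcd(r', s') = 1, and let q be a nonzero complex number that is not a root of unity. Then: (a) the set {(α, β) ∈ (ℂ∖{0})² : α^r β^s = 1 and α^u β^v = q²} equals {(q^(−s), q^r), ((−1)^v q^(−s), (−1)^u q^r)} and these two pairs are distinct; (b) the pair (q^(−s), q^r) satisfies (q^(−s))^(r') (q^r)^(s') = 1; (c) the pair ((−1)^v q^(−s), (−1)^u q^r) satisfies ((−1)^v q^(−s))^(r') ((−1)^u q^r)^(s') = −1. In particular, ((−1)^v q^(−s), (−1)^u q^r) is the unique solution (α, β) of the two equations with α^(r') β^(s')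 ≠ 1. -/
/-!
Put `A = α ^ r' * β ^ s'`. Then `A ^ 2 = α ^ r * β ^ s = 1`, so `A = ±1`. Since
`r' * v - s' * u = 1`, the monomial map `(α, β) ↦ (α ^ r' * β ^ s', α ^ u * β ^ v)` is inverted
by the adjugate matrix `[[v, -s'], [-u, r']]`, which gives `α = A ^ v * q ^ (-s)` and
`β = A ^ u * q ^ r`. Conversely both sign choices give solutions, and the sign is recovered as
`α ^ r' * β ^ s' = A`, which also separates the two pairs.
-/

section MonomialMap

variable {G₀ : Type*} [CommGroupWithZero G₀] {α β : G₀}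

theorem monomial_zpow_mul_monomial_zpow (hα : α ≠ 0) (hβ : β ≠ 0) (a b c d e f : ℤ) :
    (α ^ a * β ^ b) ^ e * (α ^ c * β ^ d) ^ f = α ^ (a * e + c * f) * β ^ (b * e + d * f) := by
  rw [mul_zpow, mul_zpow, ← zpow_mul, ← zpow_mul, ← zpow_mul, ← zpow_mul, zpow_add₀ hα,
    zpow_add₀ hβ, mul_mul_mul_comm]

theorem monomial_two_mul (a b : ℤ) :
    α ^ (2 * a) * β ^ (2 * b) = (α ^ a * β ^ b) * (α ^ a * β ^ b) := by
  rw [mul_comm 2 a, mul_comm 2 b, zpow_mul, zpow_mul, zpow_two, zpow_two, mul_mul_mul_comm]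

variable {a b c d : ℤ}

theorem monomial_adjugate_fst (hα : α ≠ 0) (hβ : β ≠ 0) (h : a * d - b * c = 1) :
    (α ^ a * β ^ b) ^ d * (α ^ c * β ^ d) ^ (-b) = α := by
  rw [monomial_zpow_mul_monomial_zpow hα hβ, show a * d + c * -b = 1 by linarith,
    show b * d + d * -b = 0 by ring, zpow_one, zpow_zero, mul_one]

theorem monomial_adjugate_snd (hα : α ≠ 0) (hβ : β ≠ 0) (h : a * d - b * c = 1) :
    (α ^ a * β ^ b) ^ (-c) * (α ^ c * β ^ d) ^ a = β := by
  rw [monomial_zpow_mul_monomial_zpow hα hβ, show a * -c + c * a = 0 by ring,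
    show b * -c + d * a = 1 by linarith, zpow_one, zpow_zero, one_mul]

end MonomialMap

section DetTwo

variable {G₀ : Type*} [CommGroupWithZero G₀] {r' s' u v : ℤ} {q ε : G₀}

theorem signed_pair_monomial_half (hq : q ≠ 0) (hε : ε * ε = 1) (hdet : r' * v - s' * u = 1) :
    (ε ^ v * q ^ (-(2 * s'))) ^ r' * (ε ^ u * q ^ (2 * r')) ^ s' = ε := by
  have hε₀ : ε ≠ 0 := left_ne_zero_of_mul_eq_one hε
  rw [monomial_zpow_mul_monomial_zpow hε₀ hq, show v * r' + u * s' = 2 * (u * s') + 1 by linarith,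
    show -(2 * s') * r' + 2 * r' * s' = 0 by ring, zpow_add₀ hε₀, zpow_mul, zpow_two, hε,
    one_zpow, one_mul, zpow_one, zpow_zero, mul_one]

theorem signed_pair_monomial_eq_sq (hq : q ≠ 0) (hε : ε * ε = 1) (hdet : r' * v - s' * u = 1) :
    (ε ^ v * q ^ (-(2 * s'))) ^ u * (ε ^ u * q ^ (2 * r')) ^ v = q ^ 2 := by
  have hε₀ : ε ≠ 0 := left_ne_zero_of_mul_eq_one hε
  rw [monomial_zpow_mul_monomial_zpow hε₀ hq, show v * u + u * v = 2 * (u * v) by ring,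
    show -(2 * s') * u + 2 * r' * v = 2 by linarith, zpow_mul, zpow_two, hε, one_zpow, one_mul,
    zpow_two, sq]

theorem eq_signed_pair_of_monomial_eq_sq {α β : G₀} (hα : α ≠ 0) (hβ : β ≠ 0)
    (hdet : r' * v - s' * u = 1) (hA : α ^ r' * β ^ s' * (α ^ r' * β ^ s') = 1)
    (hαβ : α ^ u * β ^ v = q ^ 2) :
    (α, β) = ((α ^ r' * β ^ s') ^ v * q ^ (-(2 * s')), (α ^ r' * β ^ s') ^ u * q ^ (2 * r')) := by
  have hq₂ (n : ℤ) : (q ^ 2) ^ n = q ^ (2 * n) := by rw [← zpow_natCast, ← zpow_mul]; rfl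
  have hA_inv : (α ^ r' * β ^ s')⁻¹ = α ^ r' * β ^ s' := inv_eq_of_mul_eq_one_right hA
  congr 1
  · rw [← mul_neg, ← hq₂, ← hαβ, monomial_adjugate_fst hα hβ hdet]
  · rw [← hq₂, ← hαβ, ← hA_inv, inv_zpow', monomial_adjugate_snd hα hβ hdet]

end DetTwo

variable {K : Type*} [Field K] {r' s' u v : ℤ} {q : K}

theorem solution_iff_exists_sign (hq : q ≠ 0) (hdet : r' * v - s' * u = 1) {α β : K} :
    (α ≠ 0 ∧ β ≠ 0 ∧ α ^ (2 * r') * β ^ (2 * s') = 1 ∧ α ^ u * β ^ v = q ^ 2) ↔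
      ∃ ε : K, (ε = 1 ∨ ε = -1) ∧ (α, β) = (ε ^ v * q ^ (-(2 * s')), ε ^ u * q ^ (2 * r')) := by
  constructor
  · rintro ⟨hα, hβ, hsq, hq₂⟩
    rw [monomial_two_mul] at hsq
    exact ⟨_, mul_self_eq_one_iff.mp hsq, eq_signed_pair_of_monomial_eq_sq hα hβ hdet hsq hq₂⟩
  · rintro ⟨ε, hε, hαβ⟩
    obtain ⟨rfl, rfl⟩ := Prod.ext_iff.mp hαβ
    have hε₁ : ε * ε = 1 := mul_self_eq_one_iff.mpr hε
    have hε₀ : ε ≠ 0 := left_ne_zero_of_mul_eq_one hε₁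
    refine ⟨mul_ne_zero (zpow_ne_zero _ hε₀) (zpow_ne_zero _ hq),
      mul_ne_zero (zpow_ne_zero _ hε₀) (zpow_ne_zero _ hq), ?_,
      signed_pair_monomial_eq_sq hq hε₁ hdet⟩
    rw [monomial_two_mul, signed_pair_monomial_half hq hε₁ hdet, hε₁]

theorem weight_constants_det_two_gcd_two_general (r s r' s' u v : ℤ) (h2 : r * v - s * u = 2)
    (hr : r = 2 * r') (hs : s = 2 * s')
    (q : ℂ) (hq : q ≠ 0) :
    ({p : ℂ × ℂ | p.1 ≠ 0 ∧ p.2 ≠ 0 ∧ p.1 ^ r * p.2 ^ s = 1 ∧ p.1 ^ u * p.2 ^ v = q ^ 2}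
      = {(q ^ (-s), q ^ r), ((-1 : ℂ) ^ v * q ^ (-s), (-1 : ℂ) ^ u * q ^ r)}) ∧
    ((q ^ (-s), q ^ r) : ℂ × ℂ) ≠ ((-1 : ℂ) ^ v * q ^ (-s), (-1 : ℂ) ^ u * q ^ r) ∧
    (q ^ (-s)) ^ r' * (q ^ r) ^ s' = 1 ∧
    ((-1 : ℂ) ^ v * q ^ (-s)) ^ r' * ((-1 : ℂ) ^ u * q ^ r) ^ s' = -1 ∧
    (∀ α β : ℂ, α ≠ 0 → β ≠ 0 → α ^ r * β ^ s = 1 → α ^ u * β ^ v = q ^ 2 →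
      α ^ r' * β ^ s' ≠ 1 →
      (α, β) = ((-1 : ℂ) ^ v * q ^ (-s), (-1 : ℂ) ^ u * q ^ r)) := by
  subst hr hs
  have hdet : r' * v - s' * u = 1 := by linarith
  have half_one := signed_pair_monomial_half (G₀ := ℂ) hq (mul_one 1) hdet
  have half_neg_one := signed_pair_monomial_half hq (by norm_num : (-1 : ℂ) * -1 = 1) hdet
  simp only [one_zpow, one_mul] at half_one
  refine ⟨?_, fun h ↦ ?_, half_one, half_neg_one, fun α β hα hβ hsq hq₂ hne ↦ ?_⟩
  · ext ⟨α, β⟩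
    simp only [Set.mem_ofPred_eq, Set.mem_insert_iff, Set.mem_singleton_iff]
    rw [solution_iff_exists_sign hq hdet]
    constructor
    · rintro ⟨ε, rfl | rfl, h⟩
      exacts [.inl (by simpa using h), .inr h]
    · rintro (h | h)
      exacts [⟨1, .inl rfl, by simpa using h⟩, ⟨-1, .inr rfl, h⟩]
  · have := congrArg (fun p : ℂ × ℂ ↦ p.1 ^ r' * p.2 ^ s') h
    simp only [half_one, half_neg_one] at this
    norm_num at this
  · obtain ⟨ε, rfl | rfl, hαβ⟩ := (solution_iff_exists_sign hq hdet).mp ⟨hα, hβ, hsq, hq₂⟩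
    · obtain ⟨rfl, rfl⟩ := Prod.ext_iff.mp hαβ
      exact absurd (by simpa using half_one) hne
    · exact hαβ

/-- Let `r*v - s*u = 2`, `r = 2r'`, `s = 2s'` with `gcd(r', s') = 1`,
and let `q` be nonzero and not a root of unity. Then (a) the set of pairs `(α, β)` of
nonzero complex numbers with `α^r β^s = 1` and `α^u β^v = q^2` equals
`{(q^(-s), q^r), ((-1)^v q^(-s), (-1)^u q^r)}` and these pairs are distinct;
(b) `(q^(-s))^r' (q^r)^s' = 1`; (c) `((-1)^v q^(-s))^r' ((-1)^u q^r)^s' = -1`.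
In particular `((-1)^v q^(-s), (-1)^u q^r)` is the unique solution with
`α^r' β^s' ≠ 1`. -/
theorem weight_constants_det_two_gcd_two (r s r' s' u v : ℤ) (h2 : r * v - s * u = 2)
    (hr : r = 2 * r') (hs : s = 2 * s') (hg : Int.gcd r' s' = 1)
    (q : ℂ) (hq : q ≠ 0) (hqn : ∀ n : ℤ, n ≠ 0 → q ^ n ≠ 1) :
    ({p : ℂ × ℂ | p.1 ≠ 0 ∧ p.2 ≠ 0 ∧ p.1 ^ r * p.2 ^ s = 1 ∧ p.1 ^ u * p.2 ^ v = q ^ 2}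
      = {(q ^ (-s), q ^ r), ((-1 : ℂ) ^ v * q ^ (-s), (-1 : ℂ) ^ u * q ^ r)}) ∧
    ((q ^ (-s), q ^ r) : ℂ × ℂ) ≠ ((-1 : ℂ) ^ v * q ^ (-s), (-1 : ℂ) ^ u * q ^ r) ∧
    (q ^ (-s)) ^ r' * (q ^ r) ^ s' = 1 ∧
    ((-1 : ℂ) ^ v * q ^ (-s)) ^ r' * ((-1 : ℂ) ^ u * q ^ r) ^ s' = -1 ∧
    (∀ α β : ℂ, α ≠ 0 → β ≠ 0 → α ^ r * β ^ s = 1 → α ^ u * β ^ v = q ^ 2 →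
      α ^ r' * β ^ s' ≠ 1 →
      (α, β) = ((-1 : ℂ) ^ v * q ^ (-s), (-1 : ℂ) ^ u * q ^ r)) :=
  weight_constants_det_two_gcd_two_general r s r' s' u v h2 hr hs q hq
end

section
/- Let r, s, u, v be integers with r·v − s·u = 4 and gcd(r, s) = 1, let q be a nonzero complex number that is not a root of unity, and let ζ be a complex number with ζ² = q. Then the set {(α, β) ∈ (ℂ∖{0})² : α² = q^(−s), β² = q^r, α^r β^s = 1, and α^u β^v = q²} equals {(ζ^(−s), ζ^r), ((−1)^s ζ^(−s), (−1)^r ζ^r)}, and these two pairs are distinct. -/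
/-!
Since `ζ² = q`, the square conditions say exactly that `α = ε ζ^(-s)` and `β = δ ζ^r` for signs
`ε, δ = ±1`. For such a pair the product conditions become `ε^r δ^s = 1` and `ε^u δ^v = 1`, because
`(ζ^(-s))^u (ζ^r)^v = ζ^(rv - su) = ζ⁴ = q²`. Writing the signs as `(-1)^a, (-1)^b`, these are the
linear equations `ar + bs = 0`, `au + bv = 0` over `𝔽₂`. As `gcd(r, s) = 1` the first one is
nontrivial, with solutions `(0, 0)` and `(s, r)`; as `rv - su` is even, `(u, v)` is a multiple of
`(r, s)` mod 2 and the second equation adds nothing.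
-/

theorem Int.odd_or_odd_of_gcd_eq_one {r s : ℤ} (h : Int.gcd r s = 1) : Odd r ∨ Odd s := by
  by_contra! hev
  simp only [Int.not_odd_iff_even, even_iff_two_dvd] at hev
  have := Int.dvd_coe_gcd hev.1 hev.2
  rw [h] at this
  norm_num at this

theorem sq_eq_sq_iff_exists_sign {R : Type*} [CommRing R] [NoZeroDivisors R] {a b : R} :
    a ^ 2 = b ^ 2 ↔ ∃ ε : R, (ε = 1 ∨ ε = -1) ∧ a = ε * b := by
  rw [sq_eq_sq_iff_eq_or_eq_neg]
  constructor
  · rintro (h | h)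
    exacts [⟨1, .inl rfl, by rw [h, one_mul]⟩, ⟨-1, .inr rfl, by rw [h, neg_one_mul]⟩]
  · rintro ⟨ε, rfl | rfl, rfl⟩ <;> simp

theorem zpow_sq_comm {G : Type*} [DivisionMonoid G] (a : G) (m : ℤ) :
    (a ^ m) ^ 2 = (a ^ 2) ^ m := by
  rw [← zpow_natCast, ← zpow_natCast a, ← zpow_mul, ← zpow_mul, mul_comm]

section
variable {K : Type*} [Field K] {r s u v : ℤ} {ε δ : K}

theorem neg_one_zpow_eq_or (n : ℤ) : (-1 : K) ^ n = 1 ∨ (-1 : K) ^ n = -1 :=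
  (Int.even_or_odd n).imp Even.neg_one_zpow Odd.neg_one_zpow

theorem sign_zpow_mul_sign_zpow_eq_one_iff (hK : ringChar K ≠ 2) (hrs : Odd r ∨ Odd s)
    (hε : ε = 1 ∨ ε = -1) (hδ : δ = 1 ∨ δ = -1) :
    ε ^ r * δ ^ s = 1 ↔ (ε, δ) = (1, 1) ∨ (ε, δ) = ((-1) ^ s, (-1) ^ r) := by
  have hneg := Ring.neg_one_ne_one_of_char_ne_two hK
  rcases hε with rfl | rfl <;> rcases hδ with rfl | rfl <;>
    rcases Int.even_or_odd r with hr | hr <;> rcases Int.even_or_odd s with hs | hs <;>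
    simp [hr.neg_one_zpow, hs.neg_one_zpow, hneg.symm, ← Int.not_even_iff_odd, *] at hrs ⊢

theorem neg_one_zpow_zpow_mul_neg_one_zpow_zpow (hdet : Even (r * v - s * u)) :
    ((-1 : K) ^ s) ^ u * ((-1) ^ r) ^ v = 1 := by
  have : Even (s * u + r * v) := by
    have h := hdet.add (even_two_mul (s * u))
    rwa [show r * v - s * u + 2 * (s * u) = s * u + r * v by ring] at h
  rw [← zpow_mul, ← zpow_mul, ← zpow_add₀ (by norm_num), this.neg_one_zpow]

theorem sign_zpow_mul_and_zpow_mul_eq_one_iff (hK : ringChar K ≠ 2) (hrs : Odd r ∨ Odd s)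
    (hdet : Even (r * v - s * u)) (hε : ε = 1 ∨ ε = -1) (hδ : δ = 1 ∨ δ = -1) :
    ε ^ r * δ ^ s = 1 ∧ ε ^ u * δ ^ v = 1 ↔ (ε, δ) = (1, 1) ∨ (ε, δ) = ((-1) ^ s, (-1) ^ r) := by
  rw [← sign_zpow_mul_sign_zpow_eq_one_iff hK hrs hε hδ, and_iff_left_iff_imp,
    sign_zpow_mul_sign_zpow_eq_one_iff hK hrs hε hδ]
  rintro (h | h) <;> rw [Prod.mk.injEq] at h <;> rw [h.1, h.2]
  · simp
  · exact neg_one_zpow_zpow_mul_neg_one_zpow_zpow hdet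

def weightConstants (r s u v : ℤ) (q c : K) : Set (K × K) :=
  {p | p.1 ≠ 0 ∧ p.2 ≠ 0 ∧ p.1 ^ 2 = q ^ (-s) ∧ p.2 ^ 2 = q ^ r ∧
    p.1 ^ r * p.2 ^ s = 1 ∧ p.1 ^ u * p.2 ^ v = c}

variable {q ζ : K}

theorem exists_sign_of_mem_weightConstants (hζ : ζ ^ 2 = q) {c : K} {p : K × K}
    (hp : p ∈ weightConstants r s u v q c) :
    ∃ ε δ : K, (ε = 1 ∨ ε = -1) ∧ (δ = 1 ∨ δ = -1) ∧ p = (ε * ζ ^ (-s), δ * ζ ^ r) := by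
  obtain ⟨-, -, h₁, h₂, -⟩ := hp
  rw [← hζ, ← zpow_sq_comm, sq_eq_sq_iff_exists_sign] at h₁ h₂
  obtain ⟨ε, hε, h₁⟩ := h₁
  obtain ⟨δ, hδ, h₂⟩ := h₂
  exact ⟨ε, δ, hε, hδ, Prod.ext h₁ h₂⟩

theorem sign_mul_mem_weightConstants_iff (hζ0 : ζ ≠ 0) (hζ : ζ ^ 2 = q)
    (hε : ε = 1 ∨ ε = -1) (hδ : δ = 1 ∨ δ = -1) :
    (ε * ζ ^ (-s), δ * ζ ^ r) ∈ weightConstants r s u v q (ζ ^ (r * v - s * u)) ↔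
      ε ^ r * δ ^ s = 1 ∧ ε ^ u * δ ^ v = 1 := by
  have hε0 : ε ≠ 0 := by rcases hε with rfl | rfl <;> norm_num
  have hδ0 : δ ≠ 0 := by rcases hδ with rfl | rfl <;> norm_num
  have hε2 : ε ^ 2 = 1 := by rcases hε with rfl | rfl <;> norm_num
  have hδ2 : δ ^ 2 = 1 := by rcases hδ with rfl | rfl <;> norm_num
  have twist : ∀ m n : ℤ, (ε * ζ ^ (-s)) ^ m * (δ * ζ ^ r) ^ n =
      ε ^ m * δ ^ n * ζ ^ (r * n - s * m) := by
    intro m n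
    rw [mul_zpow, mul_zpow, ← zpow_mul, ← zpow_mul, mul_mul_mul_comm, ← zpow_add₀ hζ0]
    ring_nf
  simp only [weightConstants, Set.mem_ofPred_eq, twist, mul_comm s r, sub_self, zpow_zero, mul_one,
    mul_eq_right₀ (zpow_ne_zero _ hζ0), mul_pow, hε2, hδ2, one_mul, zpow_sq_comm, hζ]
  simp [hε0, hδ0, zpow_ne_zero _ hζ0]

theorem weightConstants_eq_pair (hK : ringChar K ≠ 2) (hrs : Odd r ∨ Odd s)
    (hdet : Even (r * v - s * u)) (hζ0 : ζ ≠ 0) (hζ : ζ ^ 2 = q) :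
    weightConstants r s u v q (ζ ^ (r * v - s * u)) =
      {(ζ ^ (-s), ζ ^ r), ((-1) ^ s * ζ ^ (-s), (-1) ^ r * ζ ^ r)} := by
  have key {ε δ : K} (hε : ε = 1 ∨ ε = -1) (hδ : δ = 1 ∨ δ = -1) :
      (ε * ζ ^ (-s), δ * ζ ^ r) ∈ weightConstants r s u v q (ζ ^ (r * v - s * u)) ↔
        (ε, δ) = (1, 1) ∨ (ε, δ) = ((-1) ^ s, (-1) ^ r) := by
    rw [sign_mul_mem_weightConstants_iff hζ0 hζ hε hδ,
      sign_zpow_mul_and_zpow_mul_eq_one_iff hK hrs hdet hε hδ]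
  ext p
  constructor
  · intro hp
    obtain ⟨ε, δ, hε, hδ, rfl⟩ := exists_sign_of_mem_weightConstants hζ hp
    rcases (key hε hδ).1 hp with h | h <;> rw [Prod.mk.injEq] at h <;> simp [h]
  · rintro (rfl | rfl)
    · simpa using (key (.inl rfl) (.inl rfl)).2 (.inl rfl)
    · exact (key (neg_one_zpow_eq_or s) (neg_one_zpow_eq_or r)).2 (.inr rfl)

theorem zpow_pair_ne_neg_one_zpow_mul (hK : ringChar K ≠ 2) (hrs : Odd r ∨ Odd s) (hζ0 : ζ ≠ 0) :
    ((ζ ^ (-s), ζ ^ r) : K × K) ≠ ((-1) ^ s * ζ ^ (-s), (-1) ^ r * ζ ^ r) := by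
  simp only [ne_eq, Prod.mk.injEq, not_and_or]
  rcases hrs with hr | hs
  · right
    rw [hr.neg_one_zpow, neg_one_mul, eq_comm, Ring.eq_self_iff_eq_zero_of_char_ne_two hK]
    exact zpow_ne_zero _ hζ0
  · left
    rw [hs.neg_one_zpow, neg_one_mul, eq_comm, Ring.eq_self_iff_eq_zero_of_char_ne_two hK]
    exact zpow_ne_zero _ hζ0

end

theorem weight_constants_det_four_gcd_one_general (r s u v : ℤ) (h4 : r * v - s * u = 4)
    (hg : Int.gcd r s = 1) (q : ℂ) (hq : q ≠ 0)
    (ζ : ℂ) (hζ : ζ ^ 2 = q) :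
    ({p : ℂ × ℂ | p.1 ≠ 0 ∧ p.2 ≠ 0 ∧ p.1 ^ 2 = q ^ (-s) ∧ p.2 ^ 2 = q ^ r ∧
        p.1 ^ r * p.2 ^ s = 1 ∧ p.1 ^ u * p.2 ^ v = q ^ 2}
      = {(ζ ^ (-s), ζ ^ r), ((-1 : ℂ) ^ s * ζ ^ (-s), (-1 : ℂ) ^ r * ζ ^ r)}) ∧
    ((ζ ^ (-s), ζ ^ r) : ℂ × ℂ) ≠ ((-1 : ℂ) ^ s * ζ ^ (-s), (-1 : ℂ) ^ r * ζ ^ r) := by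
  have hζ0 : ζ ≠ 0 := by
    rintro rfl
    exact hq (by rw [← hζ]; ring)
  have hq2 : q ^ 2 = ζ ^ (r * v - s * u) := by
    rw [h4, ← hζ, ← pow_mul]
    norm_cast
  have hK : ringChar ℂ ≠ 2 := by simp [ringChar.eq_zero]
  have hrs := Int.odd_or_odd_of_gcd_eq_one hg
  refine ⟨?_, zpow_pair_ne_neg_one_zpow_mul hK hrs hζ0⟩
  rw [hq2]
  exact weightConstants_eq_pair hK hrs (by rw [h4]; decide) hζ0 hζ

/-- Let `r*v - s*u = 4`, `gcd(r, s) = 1`, `q` nonzero and not a root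
of unity, and `ζ² = q`. Then the set of pairs `(α, β)` of nonzero complex numbers with
`α² = q^(-s)`, `β² = q^r`, `α^r β^s = 1`, and `α^u β^v = q²` equals
`{(ζ^(-s), ζ^r), ((-1)^s ζ^(-s), (-1)^r ζ^r)}`, and these two pairs are distinct. -/
theorem weight_constants_det_four_gcd_one (r s u v : ℤ) (h4 : r * v - s * u = 4)
    (hg : Int.gcd r s = 1) (q : ℂ) (hq : q ≠ 0) (hqn : ∀ n : ℤ, n ≠ 0 → q ^ n ≠ 1)
    (ζ : ℂ) (hζ : ζ ^ 2 = q) :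
    ({p : ℂ × ℂ | p.1 ≠ 0 ∧ p.2 ≠ 0 ∧ p.1 ^ 2 = q ^ (-s) ∧ p.2 ^ 2 = q ^ r ∧
        p.1 ^ r * p.2 ^ s = 1 ∧ p.1 ^ u * p.2 ^ v = q ^ 2}
      = {(ζ ^ (-s), ζ ^ r), ((-1 : ℂ) ^ s * ζ ^ (-s), (-1 : ℂ) ^ r * ζ ^ r)}) ∧
    ((ζ ^ (-s), ζ ^ r) : ℂ × ℂ) ≠ ((-1 : ℂ) ^ s * ζ ^ (-s), (-1 : ℂ) ^ r * ζ ^ r) :=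
  weight_constants_det_four_gcd_one_general r s u v h4 hg q hq ζ hζ
end

section
/- Let r, s, u, v be integers with r·v − s·u = 4, r = 2r', s = 2s', gcd(r', s') = 1, and let q be a nonzero complex number that is not a root of unity. Then there exists a pair (α, β) of nonzero complex numbers with α² = q^(−s), β² = q^r, α^r β^s = 1, α^u β^v = q², and α^(r') β^(s') ≠ 1 if and only if u and v are both even. Moreover, if u and v are both even, the set of such pairs (α, β) equals {(−q^(−s'), (−1)^(r'+1) q^(r')), ((−1)^(s'+1) q^(−s'), −q^(r'))}, and these two pairs are distinct. -/
/-!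
Write `A = q ^ (-s')` and `B = q ^ r'`. The square conditions force `α = (-1) ^ a * A` and
`β = (-1) ^ b * B`, and then `α ^ m * β ^ n = (-1) ^ (a * m + b * n) * q ^ (r' * n - s' * m)`.
Since `r' * v - s' * u = 2`, the remaining conditions say exactly that `a * u + b * v ≡ 0` and
`a * r' + b * s' ≡ 1 (mod 2)`. Modulo 2 the rows `(r', s')` and `(u, v)` are linearly dependent,
so a linear form that is `1` on the first and `0` on the second forces `u` and `v` to be even.
When they are, `(a, b) ↦ a * r' + b * s'` is a nonzero linear form on `(ZMod 2)²` because
`gcd (r', s') = 1`, and it takes the value `1` at exactly the two points `(1, r' + 1)` and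
`(s' + 1, 1)`.
-/

theorem eq_zero_and_eq_zero_of_det_eq_zero {R : Type*} [CommRing R] {r s u v a b : R}
    (hdet : r * v - s * u = 0) (hrs : a * r + b * s = 1) (huv : a * u + b * v = 0) :
    u = 0 ∧ v = 0 :=
  ⟨by linear_combination -u * hrs + r * huv - b * hdet,
   by linear_combination -v * hrs + s * huv + a * hdet⟩

theorem ZMod.two_mul_add_mul_eq_one_iff {r s : ZMod 2} (hrs : ¬(r = 0 ∧ s = 0)) (a b : ZMod 2) :
    a * r + b * s = 1 ↔ (a = 1 ∧ b = r + 1) ∨ (a = s + 1 ∧ b = 1) := by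
  revert r s a b; decide

theorem not_intCast_zmod_two_eq_zero_and_eq_zero_of_gcd_eq_one {m n : ℤ} (h : Int.gcd m n = 1) :
    ¬((m : ZMod 2) = 0 ∧ (n : ZMod 2) = 0) := by
  rintro ⟨hm, hn⟩
  have := (Int.isCoprime_iff_gcd_eq_one.2 h).map (Int.castRingHom (ZMod 2))
  simp only [eq_intCast, hm, hn] at this
  exact not_isCoprime_zero_zero this

section
variable {K : Type*} [Field K]

theorem neg_one_zpow_eq_one_iff (hK : (-1 : K) ≠ 1) (n : ℤ) :
    (-1 : K) ^ n = 1 ↔ (n : ZMod 2) = 0 := by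
  rw [neg_one_zpow_eq_ite, ZMod.intCast_eq_zero_iff_even]
  split_ifs with h <;> simp [h, hK]

theorem neg_one_zpow_inj (hK : (-1 : K) ≠ 1) {m n : ℤ} :
    (-1 : K) ^ m = (-1) ^ n ↔ (m : ZMod 2) = n := by
  have h : (-1 : K) ≠ 0 := neg_ne_zero.2 one_ne_zero
  rw [← div_eq_one_iff_eq (zpow_ne_zero _ h), ← zpow_sub₀ h, neg_one_zpow_eq_one_iff hK,
    Int.cast_sub, sub_eq_zero]

theorem exists_neg_one_zpow_mul_of_sq_eq_sq {x y : K} (h : x ^ 2 = y ^ 2) :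
    ∃ a : ℤ, x = (-1) ^ a * y := by
  rcases sq_eq_sq_iff_eq_or_eq_neg.1 h with rfl | rfl
  · exact ⟨0, by simp⟩
  · exact ⟨1, by simp⟩

variable (q : K) (r' s' u v : ℤ)

def IsWeightPair (p : K × K) : Prop :=
  p.1 ≠ 0 ∧ p.2 ≠ 0 ∧ p.1 ^ 2 = q ^ (-(2 * s')) ∧ p.2 ^ 2 = q ^ (2 * r') ∧
    p.1 ^ (2 * r') * p.2 ^ (2 * s') = 1 ∧ p.1 ^ u * p.2 ^ v = q ^ 2 ∧ p.1 ^ r' * p.2 ^ s' ≠ 1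

def signedPair (a b : ℤ) : K × K := ((-1) ^ a * q ^ (-s'), (-1) ^ b * q ^ r')

variable {q r' s' u v}

theorem signedPair_inj (hK : (-1 : K) ≠ 1) (hq : q ≠ 0) {a b c d : ℤ} :
    signedPair q r' s' a b = signedPair q r' s' c d ↔ (a : ZMod 2) = c ∧ (b : ZMod 2) = d := by
  simp only [signedPair, Prod.mk.injEq, mul_left_inj' (zpow_ne_zero _ hq), neg_one_zpow_inj hK]

theorem signedPair_zpow_mul_zpow (hq : q ≠ 0) (a b m n : ℤ) :
    (signedPair q r' s' a b).1 ^ m * (signedPair q r' s' a b).2 ^ n =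
      (-1) ^ (a * m + b * n) * q ^ (r' * n - s' * m) := by
  have h1 : (-1 : K) ≠ 0 := neg_ne_zero.2 one_ne_zero
  simp only [signedPair, mul_zpow, ← zpow_mul, zpow_add₀ h1, zpow_sub₀ hq, div_eq_mul_inv,
    ← zpow_neg]
  ring_nf

theorem exists_signedPair_of_isWeightPair {p : K × K}
    (hp : IsWeightPair q r' s' u v p) : ∃ a b : ℤ, p = signedPair q r' s' a b := by
  obtain ⟨-, -, h1, h2, -⟩ := hp
  obtain ⟨a, ha⟩ := exists_neg_one_zpow_mul_of_sq_eq_sq (x := p.1) (y := q ^ (-s')) (by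
    rw [h1, ← zpow_natCast, ← zpow_mul]; ring_nf)
  obtain ⟨b, hb⟩ := exists_neg_one_zpow_mul_of_sq_eq_sq (x := p.2) (y := q ^ r') (by
    rw [h2, ← zpow_natCast, ← zpow_mul]; ring_nf)
  exact ⟨a, b, Prod.ext ha hb⟩

theorem isWeightPair_signedPair_iff (hK : (-1 : K) ≠ 1) (hq : q ≠ 0)
    (hdet : r' * v - s' * u = 2) (a b : ℤ) :
    IsWeightPair q r' s' u v (signedPair q r' s' a b) ↔
      ((a * u + b * v : ℤ) : ZMod 2) = 0 ∧ ((a * r' + b * s' : ℤ) : ZMod 2) = 1 := by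
  have hsign (c : ℤ) : ((-1 : K) ^ c) ^ 2 = 1 := by
    rw [← zpow_natCast, ← zpow_mul, mul_comm]
    exact (even_two_mul c).neg_one_zpow
  have hfst : (signedPair q r' s' a b).1 ^ 2 = q ^ (-(2 * s')) := by
    rw [signedPair, mul_pow, hsign, one_mul, ← zpow_natCast, ← zpow_mul]
    ring_nf
  have hsnd : (signedPair q r' s' a b).2 ^ 2 = q ^ (2 * r') := by
    rw [signedPair, mul_pow, hsign, one_mul, ← zpow_natCast, ← zpow_mul]
    ring_nf
  have hne : (signedPair q r' s' a b).1 ≠ 0 ∧ (signedPair q r' s' a b).2 ≠ 0 :=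
    ⟨mul_ne_zero (zpow_ne_zero _ (neg_ne_zero.2 one_ne_zero)) (zpow_ne_zero _ hq),
      mul_ne_zero (zpow_ne_zero _ (neg_ne_zero.2 one_ne_zero)) (zpow_ne_zero _ hq)⟩
  have hdiag : r' * s' - s' * r' = 0 := by ring
  have hdiag₂ : r' * (2 * s') - s' * (2 * r') = 0 := by ring
  have heven : a * (2 * r') + b * (2 * s') = 2 * (a * r' + b * s') := by ring
  simp only [IsWeightPair, signedPair_zpow_mul_zpow hq, hdet, hdiag, hdiag₂, heven, hfst, hsnd,
    hne, (even_two_mul _).neg_one_zpow, zpow_zero, mul_one, ne_eq, not_false_eq_true, true_and]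
  rw [zpow_ofNat, mul_eq_right₀ (pow_ne_zero 2 hq), neg_one_zpow_eq_one_iff hK,
    neg_one_zpow_eq_one_iff hK, ZMod.intCast_eq_zero_iff_even, ZMod.intCast_eq_zero_iff_even,
    ZMod.intCast_eq_one_iff_odd, Int.not_even_iff_odd]

theorem even_and_even_of_isWeightPair (hK : (-1 : K) ≠ 1) (hq : q ≠ 0)
    (hdet : r' * v - s' * u = 2) {p : K × K} (hp : IsWeightPair q r' s' u v p) :
    Even u ∧ Even v := by
  obtain ⟨a, b, rfl⟩ := exists_signedPair_of_isWeightPair hp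
  obtain ⟨huv, hrs⟩ := (isWeightPair_signedPair_iff hK hq hdet a b).1 hp
  push_cast at huv hrs
  have hdet₂ : (r' : ZMod 2) * v - s' * u = 0 := by
    rw [← Int.cast_mul, ← Int.cast_mul, ← Int.cast_sub, hdet]
    rfl
  simpa only [ZMod.intCast_eq_zero_iff_even] using
    eq_zero_and_eq_zero_of_det_eq_zero hdet₂ hrs huv

theorem isWeightPair_iff_of_even (hK : (-1 : K) ≠ 1) (hq : q ≠ 0)
    (hdet : r' * v - s' * u = 2) (hrs : ¬((r' : ZMod 2) = 0 ∧ (s' : ZMod 2) = 0))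
    (hu : Even u) (hv : Even v) {p : K × K} :
    IsWeightPair q r' s' u v p ↔
      p = signedPair q r' s' 1 (r' + 1) ∨ p = signedPair q r' s' (s' + 1) 1 := by
  have key (a b : ℤ) : IsWeightPair q r' s' u v (signedPair q r' s' a b) ↔
      signedPair q r' s' a b = signedPair q r' s' 1 (r' + 1) ∨
        signedPair q r' s' a b = signedPair q r' s' (s' + 1) 1 := by
    rw [isWeightPair_signedPair_iff hK hq hdet, signedPair_inj hK hq, signedPair_inj hK hq]
    push_cast [ZMod.intCast_eq_zero_iff_even.2 hu, ZMod.intCast_eq_zero_iff_even.2 hv]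
    simpa only [mul_zero, add_zero, true_and] using ZMod.two_mul_add_mul_eq_one_iff hrs a b
  constructor
  · intro hp
    obtain ⟨a, b, rfl⟩ := exists_signedPair_of_isWeightPair hp
    exact (key a b).1 hp
  · rintro (rfl | rfl)
    exacts [(key _ _).2 (Or.inl rfl), (key _ _).2 (Or.inr rfl)]

theorem signedPair_ne (hK : (-1 : K) ≠ 1) (hq : q ≠ 0)
    (hrs : ¬((r' : ZMod 2) = 0 ∧ (s' : ZMod 2) = 0)) :
    signedPair q r' s' 1 (r' + 1) ≠ signedPair q r' s' (s' + 1) 1 := by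
  rw [Ne, signedPair_inj hK hq]
  push_cast
  rintro ⟨hs, hr⟩
  exact hrs ⟨by linear_combination hr, by linear_combination -hs⟩

end

theorem weight_constants_det_four_gcd_two_general (r s r' s' u v : ℤ) (h4 : r * v - s * u = 4)
    (hr : r = 2 * r') (hs : s = 2 * s') (hg : Int.gcd r' s' = 1)
    (q : ℂ) (hq : q ≠ 0) :
    ((∃ α β : ℂ, α ≠ 0 ∧ β ≠ 0 ∧ α ^ 2 = q ^ (-s) ∧ β ^ 2 = q ^ r ∧
        α ^ r * β ^ s = 1 ∧ α ^ u * β ^ v = q ^ 2 ∧ α ^ r' * β ^ s' ≠ 1)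
      ↔ (Even u ∧ Even v)) ∧
    (Even u → Even v →
      ({p : ℂ × ℂ | p.1 ≠ 0 ∧ p.2 ≠ 0 ∧ p.1 ^ 2 = q ^ (-s) ∧ p.2 ^ 2 = q ^ r ∧
          p.1 ^ r * p.2 ^ s = 1 ∧ p.1 ^ u * p.2 ^ v = q ^ 2 ∧ p.1 ^ r' * p.2 ^ s' ≠ 1}
        = {(-q ^ (-s'), (-1 : ℂ) ^ (r' + 1) * q ^ r'),
            ((-1 : ℂ) ^ (s' + 1) * q ^ (-s'), -q ^ r')}) ∧
      ((-q ^ (-s'), (-1 : ℂ) ^ (r' + 1) * q ^ r') : ℂ × ℂ)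
        ≠ ((-1 : ℂ) ^ (s' + 1) * q ^ (-s'), -q ^ r')) := by
  subst hr hs
  have hdet : r' * v - s' * u = 2 := by linarith
  have hK : (-1 : ℂ) ≠ 1 := by norm_num
  have hrs := not_intCast_zmod_two_eq_zero_and_eq_zero_of_gcd_eq_one hg
  have hP₁ : (-q ^ (-s'), (-1 : ℂ) ^ (r' + 1) * q ^ r') = signedPair q r' s' 1 (r' + 1) := by
    simp [signedPair]
  have hP₂ : ((-1 : ℂ) ^ (s' + 1) * q ^ (-s'), -q ^ r') = signedPair q r' s' (s' + 1) 1 := by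
    simp [signedPair]
  rw [hP₁, hP₂]
  refine ⟨⟨fun ⟨α, β, h⟩ => even_and_even_of_isWeightPair hK hq hdet (p := (α, β)) h,
    fun ⟨hu, hv⟩ => ?_⟩, fun hu hv => ⟨?_, signedPair_ne hK hq hrs⟩⟩
  · exact ⟨_, _, (isWeightPair_iff_of_even hK hq hdet hrs hu hv).2 (Or.inl rfl)⟩
  · ext p
    exact isWeightPair_iff_of_even hK hq hdet hrs hu hv

/-- Let `r*v - s*u = 4`, `r = 2r'`, `s = 2s'` with `gcd(r', s') = 1`,
and let `q` be nonzero and not a root of unity. There exists a pair `(α, β)` of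
nonzero complex numbers with `α² = q^(-s)`, `β² = q^r`, `α^r β^s = 1`,
`α^u β^v = q²`, and `α^r' β^s' ≠ 1` iff `u` and `v` are both even; and in that case
the set of such pairs equals
`{(-q^(-s'), (-1)^(r'+1) q^r'), ((-1)^(s'+1) q^(-s'), -q^r')}`, whose two listed
elements are distinct. -/
theorem weight_constants_det_four_gcd_two (r s r' s' u v : ℤ) (h4 : r * v - s * u = 4)
    (hr : r = 2 * r') (hs : s = 2 * s') (hg : Int.gcd r' s' = 1)
    (q : ℂ) (hq : q ≠ 0) (hqn : ∀ n : ℤ, n ≠ 0 → q ^ n ≠ 1) :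
    ((∃ α β : ℂ, α ≠ 0 ∧ β ≠ 0 ∧ α ^ 2 = q ^ (-s) ∧ β ^ 2 = q ^ r ∧
        α ^ r * β ^ s = 1 ∧ α ^ u * β ^ v = q ^ 2 ∧ α ^ r' * β ^ s' ≠ 1)
      ↔ (Even u ∧ Even v)) ∧
    (Even u → Even v →
      ({p : ℂ × ℂ | p.1 ≠ 0 ∧ p.2 ≠ 0 ∧ p.1 ^ 2 = q ^ (-s) ∧ p.2 ^ 2 = q ^ r ∧
          p.1 ^ r * p.2 ^ s = 1 ∧ p.1 ^ u * p.2 ^ v = q ^ 2 ∧ p.1 ^ r' * p.2 ^ s' ≠ 1}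
        = {(-q ^ (-s'), (-1 : ℂ) ^ (r' + 1) * q ^ r'),
            ((-1 : ℂ) ^ (s' + 1) * q ^ (-s'), -q ^ r')}) ∧
      ((-q ^ (-s'), (-1 : ℂ) ^ (r' + 1) * q ^ r') : ℂ × ℂ)
        ≠ ((-1 : ℂ) ^ (s' + 1) * q ^ (-s'), -q ^ r')) :=
  weight_constants_det_four_gcd_two_general r s r' s' u v h4 hr hs hg q hq
end

section
/- Let q be a nonzero complex number that is not a root of unity, and let S be the set of pairs (α, β) of nonzero complex numbers such that α^u β^v = q² for some integers u, v, and α^m β^n ≠ 1 for all pairs of integers (m, n) ≠ (0, 0). Then S is uncountable. -/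
/-! Fix the first coordinate `α = q²`, which is not a root of unity. A relation `α^m β^n = 1`
with `(m, n) ≠ (0, 0)` forces `n ≠ 0` and makes `β` one of the finitely many roots of
`β^n = α^(-m)`, so only countably many `β` are multiplicatively dependent with `α`. Every other
nonzero `β` gives a point `(α, β)` of the set, and there are uncountably many of them. -/

theorem finite_setOf_pow_eq {R : Type*} [CommRing R] [IsDomain R] {n : ℕ} (hn : n ≠ 0)
    (c : R) : {x : R | x ^ n = c}.Finite :=
  (Polynomial.nthRootsFinset n c).finite_toSet.subset fun _ hx =>
    (Polynomial.mem_nthRootsFinset (Nat.pos_of_ne_zero hn) c).2 hx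

section Field

variable {K : Type*} [Field K]

theorem finite_setOf_zpow_eq {n : ℤ} (hn : n ≠ 0) (c : K) : {x : K | x ^ n = c}.Finite := by
  obtain ⟨k, rfl | rfl⟩ := n.eq_nat_or_neg
  · simpa using finite_setOf_pow_eq (R := K) (by omega) c
  · simpa [inv_eq_iff_eq_inv] using finite_setOf_pow_eq (R := K) (by omega) c⁻¹

theorem countable_setOf_zpow_mul_zpow_eq_one {α : K} (hα : ∀ m : ℤ, m ≠ 0 → α ^ m ≠ 1) :
    {β : K | ∃ m n : ℤ, (m, n) ≠ (0, 0) ∧ α ^ m * β ^ n = 1}.Countable := by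
  refine (Set.countable_iUnion fun p : ℤ × ℤ => Set.countable_iUnion fun hp : p.2 ≠ 0 =>
    (finite_setOf_zpow_eq hp (α ^ p.1)⁻¹).countable).mono ?_
  rintro β ⟨m, n, hmn, h⟩
  have hn : n ≠ 0 := by
    rintro rfl
    exact hα m (by simpa using hmn) (by simpa using h)
  exact Set.mem_biUnion (x := (m, n)) hn (eq_inv_of_mul_eq_one_right h)

end Field

/-- For `q` nonzero and not a root of unity, the set of pairs `(α, β)`
of nonzero complex numbers with `α^u β^v = q²` for some integers `u, v` and
`α^m β^n ≠ 1` for all `(m, n) ≠ (0, 0)` is uncountable. -/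
theorem generic_set_uncountable (q : ℂ) (hq : q ≠ 0)
    (hqn : ∀ n : ℤ, n ≠ 0 → q ^ n ≠ 1) :
    ¬({p : ℂ × ℂ | p.1 ≠ 0 ∧ p.2 ≠ 0 ∧ (∃ u v : ℤ, p.1 ^ u * p.2 ^ v = q ^ 2) ∧
        ∀ m n : ℤ, (m, n) ≠ (0, 0) → p.1 ^ m * p.2 ^ n ≠ 1} : Set (ℂ × ℂ)).Countable := by
  intro hS
  have hq_sq : ∀ m : ℤ, m ≠ 0 → (q ^ 2) ^ m ≠ 1 := fun m hm => by
    rw [← zpow_natCast, ← zpow_mul]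
    exact hqn _ (by omega)
  have hdependent := (countable_setOf_zpow_mul_zpow_eq_one hq_sq).insert 0
  refine not_countable_complex ((hS.preimage (Prod.mk_right_injective (q ^ 2))).mono ?_
    |>.of_sdiff hdependent)
  rintro β ⟨-, hβ⟩
  simp only [Set.mem_insert_iff, Set.mem_ofPred_eq, not_or, not_exists, not_and] at hβ
  exact ⟨pow_ne_zero 2 hq, hβ.1, ⟨1, 0, by simp⟩, hβ.2⟩
end
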